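/- There exists δ₀ > 0 and a smooth function π : (γ₀-δ₀, γ₀+δ₀) → (0,∞) such that π(γ₀) = γ₀, λ'(x) = λ'(π(x)) for all x in the interval, π(x) ≠ x for x ≠ γ₀, and π'(γ₀) = -1, where λ(x) = x·√((2+x²)/(1+x²)) and γ₀ = √(1+√7). -/

import Mathlib

noncomputable def lam (x : ℝ) : ℝ := x * Real.sqrt ((2 + x ^ 2) / (1 + x ^ 2))

noncomputable def gamma0 : ℝ := Real.sqrt (1 + Real.sqrt 7)

open Real Set Filter Topology

noncomputable def Ff (x : ℝ) : ℝ := (x^4 + 2*x^2 + 2) / Real.sqrt ((1+x^2)^3 * (2+x^2))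

noncomputable def hh (x : ℝ) : ℝ :=
  (x + gamma0)^2 * ((46+18*Real.sqrt 7) + (60+24*Real.sqrt 7)*x^2 + (27+11*Real.sqrt 7)*x^4) /
  (Real.sqrt ((1+x^2)^3*(2+x^2)) * Real.sqrt (283+107*Real.sqrt 7) *
    ((x^4+2*x^2+2) * Real.sqrt (283+107*Real.sqrt 7) + (12+4*Real.sqrt 7) * Real.sqrt ((1+x^2)^3*(2+x^2))))

lemma s7_sq : Real.sqrt 7 ^ 2 = 7 := Real.sq_sqrt (by norm_num)

lemma gamma0_pos : 0 < gamma0 := Real.sqrt_pos.2 (by positivity)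

lemma gamma0_sq : gamma0 ^ 2 = 1 + Real.sqrt 7 := Real.sq_sqrt (by positivity)

lemma A_pos (x : ℝ) : 0 < (1+x^2)^3*(2+x^2) := by positivity

lemma B0_pos : 0 < 283 + 107 * Real.sqrt 7 := by positivity

lemma hasDerivAt_lam (x : ℝ) : HasDerivAt lam (Ff x) x := by
  have h1 : (0:ℝ) < 1 + x^2 := by positivity
  have h2 : (0:ℝ) < 2 + x^2 := by positivity
  have hqpos : (0:ℝ) < (2+x^2)/(1+x^2) := by positivity
  have hx2 : HasDerivAt (fun y : ℝ => y ^ 2) (2*x) x := by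
    simpa using hasDerivAt_pow 2 x
  have hu : HasDerivAt (fun y : ℝ => 2 + y^2) (2*x) x := hx2.const_add 2
  have hv : HasDerivAt (fun y : ℝ => 1 + y^2) (2*x) x := hx2.const_add 1
  have hq : HasDerivAt (fun y : ℝ => (2+y^2)/(1+y^2))
      ((2*x*(1+x^2) - (2+x^2)*(2*x))/(1+x^2)^2) x := hu.div hv h1.ne'
  have hs : HasDerivAt (fun y : ℝ => Real.sqrt ((2+y^2)/(1+y^2)))
      (1 / (2 * Real.sqrt ((2+x^2)/(1+x^2))) * ((2*x*(1+x^2) - (2+x^2)*(2*x))/(1+x^2)^2)) x :=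
    (Real.hasDerivAt_sqrt hqpos.ne').comp x hq
  have hlam : HasDerivAt lam
      (1 * Real.sqrt ((2+x^2)/(1+x^2)) +
        x * (1 / (2 * Real.sqrt ((2+x^2)/(1+x^2))) * ((2*x*(1+x^2) - (2+x^2)*(2*x))/(1+x^2)^2))) x := by
    have := (hasDerivAt_id x).mul hs
    exact this
  convert hlam using 1
  set A1 := Real.sqrt (1+x^2) with hA1
  set B1 := Real.sqrt (2+x^2) with hB1
  have hA1p : 0 < A1 := Real.sqrt_pos.2 h1
  have hB1p : 0 < B1 := Real.sqrt_pos.2 h2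
  have hA12 : A1^2 = 1+x^2 := Real.sq_sqrt h1.le
  have hB12 : B1^2 = 2+x^2 := Real.sq_sqrt h2.le
  have hq1 : Real.sqrt ((2+x^2)/(1+x^2)) = B1 / A1 := Real.sqrt_div h2.le _
  have hq2 : Real.sqrt ((1+x^2)^3*(2+x^2)) = A1^3 * B1 := by
    rw [show (1+x^2)^3*(2+x^2) = (A1^3*B1)^2 by
      rw [show (A1^3*B1)^2 = (A1^2)^3*B1^2 by ring, hA12, hB12]]
    exact Real.sqrt_sq (by positivity)
  rw [Ff, hq1, hq2]
  field_simp
  linear_combination (-((1+x^2)^2*(2+x^2) - x^2*((1+x^2)+A1^2))) * hA12 - ((1+x^2)^2*A1^2) * hB12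

lemma Ff_gamma0 : Ff gamma0 = (12 + 4*Real.sqrt 7) / Real.sqrt (283 + 107*Real.sqrt 7) := by
  have hnum : gamma0^4 + 2*gamma0^2 + 2 = 12 + 4*Real.sqrt 7 := by
    linear_combination (gamma0^2 + 3 + Real.sqrt 7) * gamma0_sq + s7_sq
  have harg : (1+gamma0^2)^3*(2+gamma0^2) = 283 + 107*Real.sqrt 7 := by
    linear_combination ((1+gamma0^2)^2 + (1+gamma0^2)*(2+Real.sqrt 7) + (2+Real.sqrt 7)^2
      + (1+gamma0^2)^3 + (1+gamma0^2)^2*(2+Real.sqrt 7) + (1+gamma0^2)*(2+Real.sqrt 7)^2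
      + (2+Real.sqrt 7)^3) * gamma0_sq + (Real.sqrt 7^2 + 9*Real.sqrt 7 + 37) * s7_sq
  unfold Ff
  rw [hnum, harg]

lemma key (x : ℝ) : Ff x - Ff gamma0 = (x - gamma0)^2 * hh x := by
  rw [show Ff gamma0 = (12 + 4*Real.sqrt 7) / Real.sqrt (283 + 107*Real.sqrt 7) from Ff_gamma0]
  unfold Ff hh
  set s := Real.sqrt 7 with hs
  set a := Real.sqrt ((1+x^2)^3*(2+x^2)) with ha
  set b := Real.sqrt (283 + 107*s) with hb
  have hapos : 0 < a := Real.sqrt_pos.2 (A_pos x)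
  have hbpos : 0 < b := Real.sqrt_pos.2 B0_pos
  have ha2 : a^2 = (1+x^2)^3*(2+x^2) := Real.sq_sqrt (A_pos x).le
  have hb2 : b^2 = 283 + 107*s := Real.sq_sqrt B0_pos.le
  have hNn : (0:ℝ) < x^4+2*x^2+2 := by positivity
  have hN0 : (0:ℝ) < 12 + 4*s := by rw [hs]; positivity
  have hden : 0 < (x^4+2*x^2+2)*b + (12+4*s)*a :=
    add_pos (mul_pos hNn hbpos) (mul_pos hN0 hapos)
  have h2 : ((x^4+2*x^2+2)*b - (12+4*s)*a) * ((x^4+2*x^2+2)*b + (12+4*s)*a)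
      = (x-gamma0)^2*(x+gamma0)^2*((46+18*s) + (60+24*s)*x^2 + (27+11*s)*x^4) := by
    linear_combination (x^4+2*x^2+2)^2 * hb2 - (12+4*s)^2 * ha2
      + (-(114+18*s) - (184+24*s)*x^2 - (145+11*s)*x^4 - 58*x^6 - 16*x^8) * s7_sq
      + ((2*x^2-1-s-gamma0^2)*((46+18*s) + (60+24*s)*x^2 + (27+11*s)*x^4)) * gamma0_sq
  have h1 : (x^4+2*x^2+2)/a - (12+4*s)/b = ((x^4+2*x^2+2)*b - (12+4*s)*a)/(a*b) := by
    field_simp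
  rw [h1]
  field_simp
  linear_combination h2

lemma den_pos (x : ℝ) : 0 < Real.sqrt ((1+x^2)^3*(2+x^2)) * Real.sqrt (283+107*Real.sqrt 7) *
    ((x^4+2*x^2+2) * Real.sqrt (283+107*Real.sqrt 7) + (12+4*Real.sqrt 7) * Real.sqrt ((1+x^2)^3*(2+x^2))) := by
  have h1 : 0 < Real.sqrt ((1+x^2)^3*(2+x^2)) := Real.sqrt_pos.2 (A_pos x)
  have h2 : 0 < Real.sqrt (283+107*Real.sqrt 7) := Real.sqrt_pos.2 B0_pos
  have h3 : (0:ℝ) < x^4+2*x^2+2 := by positivity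
  have h4 : (0:ℝ) < 12+4*Real.sqrt 7 := by positivity
  exact mul_pos (mul_pos h1 h2) (add_pos (mul_pos h3 h2) (mul_pos h4 h1))

lemma hh_pos {x : ℝ} (hx : 0 < x) : 0 < hh x := by
  unfold hh
  have h1 : 0 < x + gamma0 := by have := gamma0_pos; linarith
  have h5 : (0:ℝ) < (46+18*Real.sqrt 7) + (60+24*Real.sqrt 7)*x^2 + (27+11*Real.sqrt 7)*x^4 := by
    positivity
  exact div_pos (mul_pos (pow_pos h1 2) h5) (den_pos x)

lemma contDiffAt_hh (x : ℝ) : ContDiffAt ℝ (⊤ : ℕ∞) hh x := by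
  have hA : ContDiffAt ℝ (⊤ : ℕ∞) (fun y : ℝ => (1+y^2)^3*(2+y^2)) x := by fun_prop
  have hsA : ContDiffAt ℝ (⊤ : ℕ∞) (fun y : ℝ => Real.sqrt ((1+y^2)^3*(2+y^2))) x :=
    (Real.contDiffAt_sqrt (A_pos x).ne').comp x hA
  have hnum : ContDiffAt ℝ (⊤ : ℕ∞) (fun y : ℝ =>
      (y + gamma0)^2 * ((46+18*Real.sqrt 7) + (60+24*Real.sqrt 7)*y^2 + (27+11*Real.sqrt 7)*y^4)) x := by
    fun_prop
  have hNn : ContDiffAt ℝ (⊤ : ℕ∞) (fun y : ℝ => y^4+2*y^2+2) x := by fun_prop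
  have hden : ContDiffAt ℝ (⊤ : ℕ∞) (fun y : ℝ => Real.sqrt ((1+y^2)^3*(2+y^2)) * Real.sqrt (283+107*Real.sqrt 7) *
      ((y^4+2*y^2+2) * Real.sqrt (283+107*Real.sqrt 7) + (12+4*Real.sqrt 7) * Real.sqrt ((1+y^2)^3*(2+y^2)))) x :=
    ((hsA.mul contDiffAt_const).mul ((hNn.mul contDiffAt_const).add (contDiffAt_const.mul hsA)))
  exact hnum.div hden (den_pos x).ne'

noncomputable def phi (x : ℝ) : ℝ := (x - gamma0) * Real.sqrt (hh x)

lemma contDiffAt_phi {x : ℝ} (hx : 0 < x) : ContDiffAt ℝ (⊤ : ℕ∞) phi x :=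
  (contDiffAt_id.sub contDiffAt_const).mul
    ((Real.contDiffAt_sqrt (hh_pos hx).ne').comp x (contDiffAt_hh x))

lemma phi_gamma0 : phi gamma0 = 0 := by simp [phi]

lemma hasDerivAt_phi : HasDerivAt phi (Real.sqrt (hh gamma0)) gamma0 := by
  have hg : DifferentiableAt ℝ (fun y : ℝ => Real.sqrt (hh y)) gamma0 :=
    (((Real.contDiffAt_sqrt (hh_pos gamma0_pos).ne').comp gamma0 (contDiffAt_hh gamma0))).differentiableAt (by simp)
  have h := ((hasDerivAt_id gamma0).sub_const gamma0).mul hg.hasDerivAt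
  have h' : HasDerivAt phi
      (1 * Real.sqrt (hh gamma0) + (id gamma0 - gamma0) * deriv (fun y : ℝ => Real.sqrt (hh y)) gamma0)
      gamma0 := h
  convert h' using 1
  simp

lemma Ff_eq {y : ℝ} (hy : 0 < y) : Ff y = Ff gamma0 + (phi y)^2 := by
  have h := key y
  have hsq : (phi y)^2 = (y - gamma0)^2 * hh y := by
    rw [phi, mul_pow, Real.sq_sqrt (hh_pos hy).le]
  linarith [h, hsq.symm.le]

theorem stmt_10 : ∃ δ₀ : ℝ, 0 < δ₀ ∧ ∃ pf : ℝ → ℝ,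
    ContDiffOn ℝ (⊤ : ℕ∞) pf (Set.Ioo (gamma0 - δ₀) (gamma0 + δ₀)) ∧
    pf gamma0 = gamma0 ∧
    (∀ x ∈ Set.Ioo (gamma0 - δ₀) (gamma0 + δ₀),
      0 < pf x ∧ deriv lam x = deriv lam (pf x)) ∧
    (∀ x ∈ Set.Ioo (gamma0 - δ₀) (gamma0 + δ₀), x ≠ gamma0 → pf x ≠ x) ∧
    deriv pf gamma0 = -1 := by
  have hgpos := gamma0_pos
  have hhg : 0 < hh gamma0 := hh_pos hgpos
  set c := Real.sqrt (hh gamma0) with hc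
  have hcpos : 0 < c := Real.sqrt_pos.2 hhg
  have hφc : ContDiffAt ℝ (⊤ : ℕ∞) phi gamma0 := contDiffAt_phi hgpos
  have hφd : HasDerivAt phi c gamma0 := hasDerivAt_phi
  have hf' := hφd.hasFDerivAt_equiv hcpos.ne'
  set Φ := hφc.toOpenPartialHomeomorph phi hf' (by simp) with hΦ
  have hΦcoe : (Φ : ℝ → ℝ) = phi := ContDiffAt.toOpenPartialHomeomorph_coe hφc hf' (by simp)
  have hsrc : gamma0 ∈ Φ.source := ContDiffAt.mem_toOpenPartialHomeomorph_source hφc hf' (by simp)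
  have htgt0 : (0:ℝ) ∈ Φ.target := by
    have := ContDiffAt.image_mem_toOpenPartialHomeomorph_target hφc hf' (by simp)
    rwa [phi_gamma0] at this
  set pf := fun x => Φ.symm (-phi x) with hpf
  have hΦg0 : Φ gamma0 = 0 := by rw [hΦcoe, phi_gamma0]
  have hpfg : pf gamma0 = gamma0 := by
    rw [hpf]
    show Φ.symm (-phi gamma0) = gamma0
    rw [phi_gamma0, neg_zero, ← hΦg0]
    exact Φ.left_inv hsrc
  have hφcont : ContinuousAt phi gamma0 := hφc.continuousAt
  have hsymc : ContinuousAt Φ.symm 0 := Φ.continuousAt_symm htgt0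
  have hpfcont : ContinuousAt pf gamma0 := by
    apply ContinuousAt.comp ?_ hφcont.neg
    rw [Pi.neg_apply, phi_gamma0, neg_zero]
    exact hsymc
  -- continuity of deriv phi at gamma0
  have hfd : ContDiffAt ℝ 0 (fderiv ℝ phi) gamma0 := hφc.fderiv_right (m := 0) (by simp)
  have hdc : ContinuousAt (deriv phi) gamma0 := by
    have h1 : ContinuousAt (fun y => fderiv ℝ phi y 1) gamma0 :=
      ((ContinuousLinearMap.apply ℝ ℝ (1:ℝ)).continuous.continuousAt).comp hfd.continuousAt
    have h2 : (fun y => fderiv ℝ phi y 1) = deriv phi := funext fun y => fderiv_apply_one_eq_deriv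
    rwa [h2] at h1
  have hdg : deriv phi gamma0 = c := hφd.deriv
  -- eventual facts
  have e1 : ∀ᶠ z in 𝓝 gamma0, 0 < z ∧ 0 < deriv phi z := by
    filter_upwards [eventually_gt_nhds hgpos,
      hdc.preimage_mem_nhds (isOpen_Ioi.mem_nhds (by rw [hdg]; exact hcpos))] with z h1 h2
    exact ⟨h1, h2⟩
  have evT : ∀ᶠ x in 𝓝 gamma0, -phi x ∈ Φ.target := by
    have := hφcont.neg.preimage_mem_nhds
      (Φ.open_target.mem_nhds (by rw [Pi.neg_apply, phi_gamma0, neg_zero]; exact htgt0))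
    exact this
  have evP : ∀ᶠ x in 𝓝 gamma0, 0 < pf x ∧ 0 < deriv phi (pf x) := by
    have h : Filter.Tendsto pf (𝓝 gamma0) (𝓝 gamma0) := by
      have := hpfcont.tendsto; rwa [hpfg] at this
    exact h.eventually e1
  have hev : ∀ᶠ x in 𝓝 gamma0,
      (0 < x ∧ 0 < deriv phi x) ∧ (-phi x ∈ Φ.target) ∧ (0 < pf x ∧ 0 < deriv phi (pf x)) := by
    filter_upwards [e1, evT, evP] with x h1 h2 h3
    exact ⟨h1, h2, h3⟩
  rcases Metric.eventually_nhds_iff_ball.1 hev with ⟨δ, hδpos, hδ⟩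
  have hmem : ∀ x ∈ Set.Ioo (gamma0 - δ) (gamma0 + δ),
      (0 < x ∧ 0 < deriv phi x) ∧ (-phi x ∈ Φ.target) ∧ (0 < pf x ∧ 0 < deriv phi (pf x)) :=
    fun x hx => hδ x (by rwa [Real.ball_eq_Ioo])
  have hpf_eq : ∀ x, -phi x ∈ Φ.target → phi (pf x) = -phi x := by
    intro x hx
    have h := Φ.right_inv hx
    rwa [hΦcoe] at h
  have hCD : ∀ x, 0 < x → -phi x ∈ Φ.target → 0 < pf x → 0 < deriv phi (pf x) →
      ContDiffAt ℝ (⊤ : ℕ∞) pf x := by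
    intro x hx1 hx2 hx3 hx4
    have hsym : ContDiffAt ℝ (⊤ : ℕ∞) Φ.symm (-phi x) := by
      apply Φ.contDiffAt_symm_deriv (f₀' := deriv phi (pf x)) hx4.ne' hx2
      · show HasDerivAt (Φ : ℝ → ℝ) _ _
        rw [hΦcoe]
        exact ((contDiffAt_phi hx3).differentiableAt (by simp)).hasDerivAt
      · rw [hΦcoe]
        exact contDiffAt_phi hx3
    exact hsym.comp x ((contDiffAt_phi hx1).neg)
  refine ⟨δ, hδpos, pf, ?_, hpfg, ?_, ?_, ?_⟩
  · intro x hx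
    obtain ⟨⟨hx1, _⟩, hx2, hx3, hx4⟩ := hmem x hx
    exact (hCD x hx1 hx2 hx3 hx4).contDiffWithinAt
  · intro x hx
    obtain ⟨⟨hx1, _⟩, hx2, hx3, hx4⟩ := hmem x hx
    refine ⟨hx3, ?_⟩
    rw [(hasDerivAt_lam x).deriv, (hasDerivAt_lam (pf x)).deriv,
      Ff_eq hx1, Ff_eq hx3, hpf_eq x hx2]
    ring
  · intro x hx hne heq
    obtain ⟨⟨hx1, _⟩, hx2, hx3, hx4⟩ := hmem x hx
    have h := hpf_eq x hx2
    rw [heq] at h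
    have hphix : phi x = 0 := by linarith
    have hs : 0 < Real.sqrt (hh x) := Real.sqrt_pos.2 (hh_pos hx1)
    have : x - gamma0 = 0 := by
      rcases mul_eq_zero.1 hphix with h' | h'
      · exact h'
      · exact absurd h' hs.ne'
    exact hne (by linarith)
  · have hm := hδ gamma0 (Metric.mem_ball_self hδpos)
    obtain ⟨⟨hx1, _⟩, hx2, hx3, hx4⟩ := hm
    have hpfdiff : DifferentiableAt ℝ pf gamma0 :=
      (hCD gamma0 hx1 hx2 hx3 hx4).differentiableAt (by simp)
    have hd : HasDerivAt pf (deriv pf gamma0) gamma0 := hpfdiff.hasDerivAt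
    have hφd' : HasDerivAt phi c (pf gamma0) := by rw [hpfg]; exact hφd
    have hcomp : HasDerivAt (phi ∘ pf) (c * deriv pf gamma0) gamma0 := hφd'.comp gamma0 hd
    have hevEq : (fun x => -phi x) =ᶠ[𝓝 gamma0] (phi ∘ pf) := by
      filter_upwards [evT] with x hx
      exact (hpf_eq x hx).symm
    have hneg : HasDerivAt (fun x => -phi x) (-c) gamma0 := hφd.neg
    have huniq : c * deriv pf gamma0 = -c :=
      (hcomp.congr_of_eventuallyEq hevEq).unique hneg
    have : c * deriv pf gamma0 = c * (-1) := by linarith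
    exact mul_left_cancel₀ hcpos.ne' this
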